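/- Let H be a separable complex Hilbert space and S_H the unilateral shift on ℓ²(ℕ,H). For every closed subspace M ⊆ ℓ²(ℕ,H) invariant under S_H there exist a separable complex Hilbert space K and an isometry W : ℓ²(ℕ,K) → ℓ²(ℕ,H) satisfying W ∘ S_K = S_H ∘ W such that M = W(ℓ²(ℕ,K)). -/

import Mathlib

noncomputable section

open scoped ENNReal InnerProductSpace

set_option linter.unusedSectionVars false

namespace Shift

variable (H : Type*) [NormedAddCommGroup H] [InnerProductSpace ℂ H]

/-- The underlying function of the unilateral shift: `(shiftFun x) 0 = 0`,
`(shiftFun x) (n+1) = x n`. -/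
def shiftFun (x : ℕ → H) : ℕ → H
  | 0 => 0
  | n + 1 => x n

variable {H}

theorem memℓp_shiftFun {x : ℕ → H} (hx : Memℓp x 2) : Memℓp (shiftFun H x) 2 := by
  apply memℓp_gen
  have h2 : (0:ℝ) < (2 : ℝ≥0∞).toReal := by norm_num
  have hs : Summable fun n : ℕ => ‖x n‖ ^ (2 : ℝ≥0∞).toReal := (memℓp_gen_iff h2).1 hx
  exact (summable_nat_add_iff 1).1 (by simpa [shiftFun] using hs)

theorem tsum_shiftFun (x : ℕ → H) (hx : Memℓp x 2) :
    (∑' n, ‖shiftFun H x n‖ ^ (2 : ℝ≥0∞).toReal) = ∑' n, ‖x n‖ ^ (2 : ℝ≥0∞).toReal := by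
  have h2 : (0:ℝ) < (2 : ℝ≥0∞).toReal := by norm_num
  rw [Summable.tsum_eq_zero_add (memℓp_gen_iff h2 |>.1 (memℓp_shiftFun hx))]
  simp [shiftFun]

variable (H)

/-- The unilateral shift as a linear isometry on `ℓ²(ℕ, H)`. -/
def shiftLi : lp (fun _ : ℕ => H) 2 →ₗᵢ[ℂ] lp (fun _ : ℕ => H) 2 where
  toFun x := ⟨shiftFun H x, memℓp_shiftFun (lp.memℓp x)⟩
  map_add' x y := by
    apply lp.ext
    funext n
    cases n <;> simp [shiftFun, lp.coeFn_add] <;> first | exact (add_zero (0 : H)).symm | rfl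
  map_smul' c x := by
    apply lp.ext
    funext n
    cases n <;> simp [shiftFun, lp.coeFn_smul]
  norm_map' x := by
    have h2 : (0:ℝ) < (2 : ℝ≥0∞).toReal := by norm_num
    rw [lp.norm_eq_tsum_rpow h2, lp.norm_eq_tsum_rpow h2]
    congr 1
    exact tsum_shiftFun x (lp.memℓp x)

/-- The unilateral shift `S_H` on `ℓ²(ℕ, H)`, as a continuous linear map:
`(shift H x) 0 = 0` and `(shift H x) (n+1) = x n`. -/
def shift : lp (fun _ : ℕ => H) 2 →L[ℂ] lp (fun _ : ℕ => H) 2 :=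
  (shiftLi H).toContinuousLinearMap

variable {H}

/-! For a closed subspace `M` invariant under an isometry `S`, the wandering subspace
`L = M ⊖ S M` has mutually orthogonal images `Sⁿ L`. A vector of `M` orthogonal to all of them
lies in `S M`, and repeating the argument puts it in the range of every `Sⁿ`; for the shift
that forces it to vanish, so `M = ⨁ₙ Sⁿ L`. Since `L` is a separable Hilbert space it is
`ℓ²(ι)` for a countable, hence small, `ι`; with `K = ℓ²(ι)` the inner operator sends the `n`-th
coordinate of `ℓ²(ℕ, K)` onto `Sⁿ L`.
-/

open TopologicalSpace Function

theorem _root_.Orthonormal.countable {𝕜 E ι : Type*} [RCLike 𝕜] [NormedAddCommGroup E]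
    [InnerProductSpace 𝕜 E] [SeparableSpace E] {v : ι → E} (hv : Orthonormal 𝕜 v) :
    Countable ι := by
  have hdisj : Pairwise (Disjoint on fun i => Metric.ball (v i) (1 / 2)) := by
    intro i j hij
    apply Metric.ball_disjoint_ball
    have hsq : ‖v i - v j‖ ^ 2 = 2 := by
      rw [@norm_sub_sq 𝕜, hv.1 i, hv.1 j, hv.2 hij]
      norm_num
    rw [dist_eq_norm]
    nlinarith [norm_nonneg (v i - v j)]
  exact hdisj.countable_of_isOpen_disjoint (fun _ => Metric.isOpen_ball)
    fun i => ⟨v i, Metric.mem_ball_self (by norm_num)⟩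

theorem _root_.lp.separableSpace {α : Type*} [Countable α] {G : α → Type*}
    [∀ i, NormedAddCommGroup (G i)] [∀ i, SeparableSpace (G i)] {p : ℝ≥0∞} [Fact (1 ≤ p)]
    (hp : p ≠ ∞) : SeparableSpace (lp G p) := by
  classical
  let partialSum : Finset α → (∀ i, G i) → lp G p := fun s v => ∑ i ∈ s, lp.single p i (v i)
  have hcont (s : Finset α) : Continuous (partialSum s) :=
    continuous_finsetSum _ fun i _ => (lp.isometry_single i).continuous.comp (continuous_apply i)
  have hdense : Set.univ ⊆ closure (⋃ s, Set.range (partialSum s)) := fun f _ =>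
    mem_closure_of_tendsto (lp.hasSum_single hp f)
      (Filter.Eventually.of_forall fun s => Set.mem_iUnion.2 ⟨s, fun i => f i, rfl⟩)
  exact isSeparable_univ_iff.1 <|
    ((IsSeparable.iUnion fun s => isSeparable_range (hcont s)).closure).mono hdense

def _root_.HilbertBasis.reindex {𝕜 E ι ι' : Type*} [RCLike 𝕜] [NormedAddCommGroup E]
    [InnerProductSpace 𝕜 E] [CompleteSpace E] (b : HilbertBasis ι 𝕜 E) (e : ι ≃ ι') :
    HilbertBasis ι' 𝕜 E :=
  HilbertBasis.mk (b.orthonormal.comp e.symm e.symm.injective)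
    (by rw [e.symm.surjective.range_comp, b.dense_span])

theorem _root_.exists_linearIsometryEquiv_lp_of_separableSpace (𝕜 E : Type*) [RCLike 𝕜]
    [NormedAddCommGroup E] [InnerProductSpace 𝕜 E] [CompleteSpace E] [SeparableSpace E] :
    ∃ (ι : Type) (_ : Countable ι), Nonempty (E ≃ₗᵢ[𝕜] lp (fun _ : ι => 𝕜) 2) := by
  obtain ⟨w, b, -⟩ := exists_hilbertBasis 𝕜 E
  have : Countable w := b.orthonormal.countable
  have : Small.{0} w := Countable.toSmall w
  let e : w ≃ Shrink.{0} w := equivShrink w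
  exact ⟨Shrink.{0} w, .of_equiv w e, ⟨(b.reindex e).repr⟩⟩

section Wandering

open LinearIsometry

variable {𝕜 E : Type*} [RCLike 𝕜] [NormedAddCommGroup E] [InnerProductSpace 𝕜 E]
  (S : E →ₗᵢ[𝕜] E) (M : Submodule 𝕜 E)

def _root_.LinearIsometry.wanderingSubspace : Submodule 𝕜 E := M ⊓ (M.map S.toLinearMap)ᗮ

variable {S M}

theorem _root_.LinearIsometry.pow_succ_apply (n : ℕ) (x : E) :
    (S ^ (n + 1)) x = S ((S ^ n) x) := by
  rw [coe_pow, Function.iterate_succ_apply', ← coe_pow]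

theorem _root_.LinearIsometry.pow_apply_mem (hMS : ∀ x ∈ M, S x ∈ M) {x : E} (hx : x ∈ M) (n : ℕ) :
    (S ^ n) x ∈ M := by
  induction n with
  | zero => simpa using hx
  | succ n ih => simpa only [pow_succ_apply] using hMS _ ih

theorem _root_.LinearIsometry.isClosed_wanderingSubspace (hM : IsClosed (M : Set E)) :
    IsClosed (S.wanderingSubspace M : Set E) :=
  hM.inter (M.map S.toLinearMap).isClosed_orthogonal

theorem _root_.LinearIsometry.inner_pow_apply_wanderingSubspace (hMS : ∀ x ∈ M, S x ∈ M) {u v : E}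
    (hu : u ∈ S.wanderingSubspace M) (hv : v ∈ S.wanderingSubspace M) {m n : ℕ} (hmn : m < n) :
    ⟪(S ^ m) u, (S ^ n) v⟫_𝕜 = 0 := by
  obtain ⟨k, rfl⟩ := Nat.exists_eq_add_of_lt hmn
  have hSv : (S ^ (k + 1)) v ∈ M.map S.toLinearMap := by
    rw [pow_succ_apply]
    exact Submodule.mem_map_of_mem (pow_apply_mem hMS hv.1 k)
  rw [add_assoc, pow_add, coe_mul, Function.comp_apply, inner_map_map]
  exact hu.2 _ hSv |> inner_eq_zero_symm.1

theorem _root_.LinearIsometry.orthogonalFamily_pow_comp (hMS : ∀ x ∈ M, S x ∈ M)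
    {K : Type*} [NormedAddCommGroup K] [InnerProductSpace 𝕜 K] (T : K →ₗᵢ[𝕜] E)
    (hT : ∀ x, T x ∈ S.wanderingSubspace M) :
    OrthogonalFamily 𝕜 (fun _ : ℕ => K) fun n => (S ^ n).comp T := by
  intro m n hmn x y
  rcases hmn.lt_or_gt with h | h
  · exact inner_pow_apply_wanderingSubspace hMS (hT x) (hT y) h
  · exact inner_eq_zero_symm.1 (inner_pow_apply_wanderingSubspace hMS (hT y) (hT x) h)

variable [CompleteSpace E]

theorem _root_.LinearIsometry.mem_map_of_mem_orthogonal_wanderingSubspace (hMS : ∀ x ∈ M, S x ∈ M)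
    (hM : IsClosed (M : Set E)) {x : E} (hx : x ∈ M) (hxW : x ∈ (S.wanderingSubspace M)ᗮ) :
    x ∈ M.map S.toLinearMap := by
  have : CompleteSpace (M.map S.toLinearMap) :=
    ((S.isometry.isUniformInducing.isComplete_iff).2 hM.isComplete).completeSpace_coe
  set y := (M.map S.toLinearMap).starProjection x
  have hy : y ∈ M.map S.toLinearMap := (M.map S.toLinearMap).starProjection_apply_mem x
  have hmap_le : M.map S.toLinearMap ≤ (S.wanderingSubspace M)ᗮ :=
    (Submodule.le_orthogonal_orthogonal _).trans (Submodule.orthogonal_le inf_le_right)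
  have hxy : x - y ∈ S.wanderingSubspace M ⊓ (S.wanderingSubspace M)ᗮ :=
    ⟨⟨M.sub_mem hx (Submodule.map_le_iff_le_comap.2 hMS hy),
        (M.map S.toLinearMap).sub_starProjection_mem_orthogonal x⟩,
      Submodule.sub_mem _ hxW (hmap_le hy)⟩
  rw [Submodule.inf_orthogonal_eq_bot, Submodule.mem_bot, sub_eq_zero] at hxy
  exact hxy ▸ hy

theorem _root_.LinearIsometry.exists_eq_pow_apply_of_forall_inner_eq_zero (hMS : ∀ x ∈ M, S x ∈ M)
    (hM : IsClosed (M : Set E)) {x : E} (hx : x ∈ M)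
    (hperp : ∀ m, ∀ u ∈ S.wanderingSubspace M, ⟪(S ^ m) u, x⟫_𝕜 = 0) (n : ℕ) :
    ∃ y, x = (S ^ n) y := by
  induction n generalizing x with
  | zero => exact ⟨x, rfl⟩
  | succ n ih =>
    have hxW : x ∈ (S.wanderingSubspace M)ᗮ := fun u hu => by simpa using hperp 0 u hu
    obtain ⟨z, hz, rfl⟩ := mem_map_of_mem_orthogonal_wanderingSubspace hMS hM hx hxW
    have hperp' : ∀ m, ∀ u ∈ S.wanderingSubspace M, ⟪(S ^ m) u, z⟫_𝕜 = 0 := fun m u hu => by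
      rw [← S.inner_map_map, ← pow_succ_apply]
      exact hperp (m + 1) u hu
    obtain ⟨y, rfl⟩ := ih hz hperp'
    exact ⟨y, (pow_succ_apply n y).symm⟩

theorem _root_.LinearIsometry.topologicalClosure_iSup_map_pow_wanderingSubspace
    (hMS : ∀ x ∈ M, S x ∈ M) (hM : IsClosed (M : Set E))
    (hpure : ∀ x, (∀ n, ∃ y, x = (S ^ n) y) → x = 0) :
    (⨆ n, (S.wanderingSubspace M).map (S ^ n).toLinearMap).topologicalClosure = M := by
  set N := (⨆ n, (S.wanderingSubspace M).map (S ^ n).toLinearMap).topologicalClosure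
  have hNM : N ≤ M := Submodule.topologicalClosure_minimal _
    (iSup_le fun n => Submodule.map_le_iff_le_comap.2 fun _ hu => pow_apply_mem hMS hu.1 n) hM
  have : CompleteSpace N := (Submodule.isClosed_topologicalClosure _).completeSpace_coe
  have hperp : Nᗮ ⊓ M = ⊥ := by
    refine (Submodule.eq_bot_iff _).2 fun x ⟨hxN, hxM⟩ => hpure x fun n => ?_
    refine exists_eq_pow_apply_of_forall_inner_eq_zero hMS hM hxM (fun m u hu => hxN _ ?_) n
    exact Submodule.le_topologicalClosure _
      (Submodule.mem_iSup_of_mem m (Submodule.mem_map_of_mem hu))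
  rw [← Submodule.sup_orthogonal_inf_of_hasOrthogonalProjection hNM, hperp, sup_bot_eq]

theorem _root_.LinearIsometry.range_linearIsometry_orthogonalFamily_pow_comp
    (hMS : ∀ x ∈ M, S x ∈ M) (hM : IsClosed (M : Set E))
    (hpure : ∀ x, (∀ n, ∃ y, x = (S ^ n) y) → x = 0)
    {K : Type*} [NormedAddCommGroup K] [InnerProductSpace 𝕜 K] [CompleteSpace K]
    {T : K →ₗᵢ[𝕜] E} (hT : LinearMap.range T.toLinearMap = S.wanderingSubspace M)
    (hV : OrthogonalFamily 𝕜 (fun _ : ℕ => K) fun n => (S ^ n).comp T) :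
    LinearMap.range hV.linearIsometry.toLinearMap = M := by
  have hrange (n : ℕ) : LinearMap.range ((S ^ n).comp T).toLinearMap =
      (S.wanderingSubspace M).map (S ^ n).toLinearMap := by
    rw [← hT]
    exact LinearMap.range_comp T.toLinearMap (S ^ n).toLinearMap
  rw [hV.range_linearIsometry]
  simp_rw [hrange]
  exact topologicalClosure_iSup_map_pow_wanderingSubspace hMS hM hpure

end Wandering

theorem shiftLi_single (i : ℕ) (a : H) :
    shiftLi H (lp.single 2 i a) = lp.single 2 (i + 1) a := by
  refine lp.ext (funext fun n => ?_)
  cases n <;> simp [shiftLi, shiftFun, lp.single_apply, Pi.single_apply]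

theorem pow_shiftLi_apply_of_lt (x : lp (fun _ : ℕ => H) 2) {n k : ℕ} (hk : k < n) :
    ((shiftLi H ^ n) x : ℕ → H) k = 0 := by
  induction n generalizing k with
  | zero => omega
  | succ n ih =>
    rw [LinearIsometry.pow_succ_apply]
    cases k with
    | zero => rfl
    | succ k => exact ih (by omega)

theorem eq_zero_of_forall_eq_pow_shiftLi_apply {x : lp (fun _ : ℕ => H) 2}
    (hx : ∀ n, ∃ y, x = (shiftLi H ^ n) y) : x = 0 := by
  refine lp.ext (funext fun k => ?_)
  obtain ⟨y, rfl⟩ := hx (k + 1)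
  exact pow_shiftLi_apply_of_lt y k.lt_succ_self

theorem linearIsometry_comp_shift {E K : Type*} [NormedAddCommGroup E] [InnerProductSpace ℂ E]
    [CompleteSpace E] [NormedAddCommGroup K] [InnerProductSpace ℂ K]
    {S : E →ₗᵢ[ℂ] E} {T : K →ₗᵢ[ℂ] E}
    (hV : OrthogonalFamily ℂ (fun _ : ℕ => K) fun n => (S ^ n).comp T) :
    hV.linearIsometry.toContinuousLinearMap.comp (shift K) =
      S.toContinuousLinearMap.comp hV.linearIsometry.toContinuousLinearMap := by
  refine lp.ext_continuousLinearMap (by norm_num) fun i => ContinuousLinearMap.ext fun a => ?_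
  simp [shift, shiftLi_single, hV.linearIsometry_apply_single, LinearIsometry.pow_succ_apply]

/-- Beurling-Lax-Halmos: every shift-invariant closed subspace of
`ℓ²(ℕ,H)` (`H` separable) is the range of a single inner operator. -/
theorem beurling_lax_halmos
    {H : Type*} [NormedAddCommGroup H] [InnerProductSpace ℂ H] [CompleteSpace H]
    [TopologicalSpace.SeparableSpace H]
    (M : Submodule ℂ (lp (fun _ : ℕ => H) 2)) (hMclosed : IsClosed (M : Set (lp (fun _ : ℕ => H) 2)))
    (hMinv : ∀ x ∈ M, shift H x ∈ M) :
    ∃ (K : Type) (_ : NormedAddCommGroup K) (_ : InnerProductSpace ℂ K),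
      CompleteSpace K ∧ TopologicalSpace.SeparableSpace K ∧
      ∃ W : lp (fun _ : ℕ => K) 2 →L[ℂ] lp (fun _ : ℕ => H) 2,
        Isometry W ∧
        W.comp (shift K) = (shift H).comp W ∧
        LinearMap.range (W : lp (fun _ : ℕ => K) 2 →ₗ[ℂ] lp (fun _ : ℕ => H) 2) = M := by
  set L := (shiftLi H).wanderingSubspace M
  have : SeparableSpace (lp (fun _ : ℕ => H) 2) := lp.separableSpace (by norm_num)
  have : SecondCountableTopology (lp (fun _ : ℕ => H) 2) :=
    UniformSpace.secondCountable_of_separable _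
  have : CompleteSpace L := (LinearIsometry.isClosed_wanderingSubspace hMclosed).completeSpace_coe
  obtain ⟨ι, _, ⟨e⟩⟩ := exists_linearIsometryEquiv_lp_of_separableSpace ℂ L
  let T := L.subtypeₗᵢ.comp e.symm.toLinearIsometry
  have hT : LinearMap.range T.toLinearMap = L := by
    rw [show T.toLinearMap = L.subtype ∘ₗ e.symm.toLinearEquiv.toLinearMap from rfl,
      LinearMap.range_comp, LinearEquiv.range, Submodule.map_top, Submodule.range_subtype]
  have hV := LinearIsometry.orthogonalFamily_pow_comp hMinv T fun x => (e.symm x).2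
  exact ⟨lp (fun _ : ι => ℂ) 2, inferInstance, inferInstance, inferInstance,
    lp.separableSpace (by norm_num), hV.linearIsometry.toContinuousLinearMap,
    hV.linearIsometry.isometry, linearIsometry_comp_shift hV,
    LinearIsometry.range_linearIsometry_orthogonalFamily_pow_comp hMinv hMclosed
      (fun _ => eq_zero_of_forall_eq_pow_shiftLi_apply) hT hV⟩

end Shift
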